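/- Let 1 ≤ p ≤ ∞, let φ ∈ L^∞(T) be non-null with K_p(φ) ≠ {0}, and let g ≥ 0 be a function in L^{p/2}(T). If there exists f ∈ K_p(φ) with |f|² = g a.e. on T, then the function conj(z φ)·g belongs to H^{p/2}(T). -/

import Mathlib

open MeasureTheory Complex Filter Set Metric
open scoped Real ENNReal ComplexConjugate

noncomputable section

instance : Fact (0 < 2 * Real.pi) := ⟨by positivity⟩

/-- The unit circle, realized as `ℝ / 2πℤ`. -/
abbrev 𝕋 := AddCircle (2 * Real.pi)

/-- The normalized Lebesgue (Haar) measure on the circle. -/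
abbrev m : Measure 𝕋 := AddCircle.haarAddCircle

/-- The identity coordinate `z = e^{iθ}` on the circle. -/
def bz : 𝕋 → ℂ := fun x => fourier 1 x

/-- `F` belongs to the Hardy class `H^p` of the open unit disk:
holomorphic with uniformly bounded `p`-means on circles (bounded, if `p = ∞`). -/
def HpDisk (p : ℝ≥0∞) (F : ℂ → ℂ) : Prop :=
  DifferentiableOn ℂ F (ball (0:ℂ) 1) ∧
    if p = ∞ then ∃ C : ℝ, ∀ w ∈ ball (0:ℂ) 1, ‖F w‖ ≤ C
    else ∃ C : ℝ, ∀ r ∈ Ico (0:ℝ) 1, (∫ x : 𝕋, ‖F ((r : ℂ) * bz x)‖ ^ p.toReal ∂m) ≤ C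

/-- `f : 𝕋 → ℂ` is the a.e. radial boundary function of `F : ℂ → ℂ`. -/
def IsBoundary (F : ℂ → ℂ) (f : 𝕋 → ℂ) : Prop :=
  ∀ᵐ x ∂m, Tendsto (fun r : ℝ => F ((r : ℂ) * bz x)) (nhdsWithin 1 (Iio 1)) (nhds (f x))

/-- `f` belongs to the Hardy space `H^p(𝕋)`: it is the boundary function of some
disk function of class `H^p`. -/
def MemHp (p : ℝ≥0∞) (f : 𝕋 → ℂ) : Prop :=
  ∃ F : ℂ → ℂ, HpDisk p F ∧ IsBoundary F f

/-- `f` belongs to the kernel `K_p(φ)` of the Toeplitz operator `T_φ`: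
`f ∈ H^p` and the companion function `conj (z φ f)` is in `H^p`. -/
def MemKp (p : ℝ≥0∞) (φ f : 𝕋 → ℂ) : Prop :=
  MemHp p f ∧ MemHp p (fun x => conj (bz x * φ x * f x))

/-- The set `V_φ = {|f|² : f ∈ K₂(φ), 0 < ‖f‖₂ ≤ 1}` (of a.e.-defined functions). -/
def Vphi (φ : 𝕋 → ℂ) : Set (𝕋 → ℝ) :=
  {g | ∃ f : 𝕋 → ℂ, MemKp 2 φ f ∧ 0 < eLpNorm f 2 m ∧ eLpNorm f 2 m ≤ 1 ∧
        ∀ᵐ x ∂m, g x = ‖f x‖ ^ 2}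

/-- `g` is an extreme point of `V_φ` (in the a.e. sense). -/
def IsExtremeVphi (φ : 𝕋 → ℂ) (g : 𝕋 → ℝ) : Prop :=
  g ∈ Vphi φ ∧ ∀ g₁ ∈ Vphi φ, ∀ g₂ ∈ Vphi φ,
    (∀ᵐ x ∂m, g x = (g₁ x + g₂ x) / 2) → (g₁ =ᵐ[m] g ∧ g₂ =ᵐ[m] g)

/-- The outer function on the disk with boundary modulus `w`, given by the
Herglotz-type integral formula. -/
def OuterOf (w : 𝕋 → ℝ) : ℂ → ℂ :=
  fun ζ => Complex.exp (∫ x : 𝕋, ((bz x + ζ) / (bz x - ζ)) * (Real.log (w x) : ℂ) ∂m)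

/-- `F : ℂ → ℂ` is an outer function: a unimodular constant times `OuterOf w`
for some weight `w ≥ 0` with `log w ∈ L¹`. -/
def IsOuter (F : ℂ → ℂ) : Prop :=
  ∃ (c : ℂ) (w : 𝕋 → ℝ), ‖c‖ = 1 ∧ (∀ᵐ x ∂m, 0 ≤ w x) ∧
    Integrable (fun x => Real.log (w x)) m ∧
    ∀ ζ ∈ ball (0:ℂ) 1, F ζ = c * OuterOf w ζ

/-- A boundary function `f ∈ H^p(𝕋)` is outer. -/
def IsOuterBnd (p : ℝ≥0∞) (f : 𝕋 → ℂ) : Prop :=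
  ∃ F : ℂ → ℂ, HpDisk p F ∧ IsOuter F ∧ IsBoundary F f

/-- `F` is an inner function: holomorphic and bounded by `1` on the disk,
with unimodular boundary values a.e. -/
def IsInner (F : ℂ → ℂ) : Prop :=
  DifferentiableOn ℂ F (ball (0:ℂ) 1) ∧ (∀ w ∈ ball (0:ℂ) 1, ‖F w‖ ≤ 1) ∧
    ∃ f : 𝕋 → ℂ, IsBoundary F f ∧ ∀ᵐ x ∂m, ‖f x‖ = 1

/-- The inner function `J` divides the inner function `I`. -/
def InnerDivides (J I : ℂ → ℂ) : Prop :=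
  ∃ K : ℂ → ℂ, IsInner K ∧ ∀ ζ ∈ ball (0:ℂ) 1, I ζ = J ζ * K ζ

/-- `F` belongs to the Smirnov class `N⁺`: a quotient of an `H^∞` function by an
outer `H^∞` function. -/
def MemNplus (F : ℂ → ℂ) : Prop :=
  ∃ G H : ℂ → ℂ, HpDisk ∞ G ∧ HpDisk ∞ H ∧ IsOuter H ∧
    ∀ ζ ∈ ball (0:ℂ) 1, F ζ * H ζ = G ζ

/-!
For `f ∈ K_p(φ)` both `f` and `h := conj (z φ f)` lie in `H^p`, and on the circle
`f · h = conj (z φ) · |f|² = conj (z φ) · g`. So it suffices that `H^p · H^p ⊆ H^{p/2}`: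
the product of the disk functions is holomorphic, its boundary function is the product of
the boundary functions, and its `p/2`-means are controlled by the `p`-means of the factors
through `|ab|^{p/2} ≤ (|a|^p + |b|^p) / 2`.
-/

lemma Real.mul_rpow_half_le_add_rpow {a b : ℝ} (ha : 0 ≤ a) (hb : 0 ≤ b) (s : ℝ) :
    (a * b) ^ (s / 2) ≤ (a ^ s + b ^ s) / 2 := by
  have hsq : ∀ c : ℝ, 0 ≤ c → c ^ (s / 2) = (c ^ s) ^ (1 / 2 : ℝ) := fun c hc => by
    rw [← Real.rpow_mul hc]; ring_nf
  calc (a * b) ^ (s / 2) = (a ^ s) ^ (1 / 2 : ℝ) * (b ^ s) ^ (1 / 2 : ℝ) := by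
        rw [Real.mul_rpow ha hb, hsq a ha, hsq b hb]
    _ ≤ 1 / 2 * a ^ s + 1 / 2 * b ^ s :=
        Real.geom_mean_le_arith_mean2_weighted (by norm_num) (by norm_num)
          (Real.rpow_nonneg ha s) (Real.rpow_nonneg hb s) (by norm_num)
    _ = (a ^ s + b ^ s) / 2 := by ring

lemma continuous_comp_mul_bz {F : ℂ → ℂ} (hF : DifferentiableOn ℂ F (ball (0:ℂ) 1))
    {r : ℝ} (hr : r ∈ Ico (0:ℝ) 1) : Continuous fun x : 𝕋 => F ((r : ℂ) * bz x) := by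
  refine hF.continuousOn.comp_continuous
    (continuous_const.mul (map_continuous (fourier 1))) fun x => ?_
  rw [mem_ball_zero_iff, norm_mul, show ‖bz x‖ = 1 from Circle.norm_coe _, mul_one,
    Complex.norm_real, Real.norm_of_nonneg hr.1]
  exact hr.2

lemma integrable_norm_comp_mul_bz_rpow {F : ℂ → ℂ} (hF : DifferentiableOn ℂ F (ball (0:ℂ) 1))
    {r : ℝ} (hr : r ∈ Ico (0:ℝ) 1) {s : ℝ} (hs : 0 ≤ s) :
    Integrable (fun x : 𝕋 => ‖F ((r : ℂ) * bz x)‖ ^ s) m :=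
  ((continuous_comp_mul_bz hF hr).norm.rpow_const fun _ => Or.inr hs)
    |>.integrable_of_hasCompactSupport (HasCompactSupport.of_compactSpace _)

lemma HpDisk.mul {p : ℝ≥0∞} {F G : ℂ → ℂ} (hF : HpDisk p F) (hG : HpDisk p G) :
    HpDisk (p / 2) (F * G) := by
  refine ⟨hF.1.mul hG.1, ?_⟩
  obtain ⟨hFd, hFb⟩ := hF
  obtain ⟨hGd, hGb⟩ := hG
  by_cases hp : p = ∞
  · rw [if_pos hp] at hFb hGb
    rw [if_pos (by simp [hp, ENNReal.div_eq_top])]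
    obtain ⟨C₁, hC₁⟩ := hFb
    obtain ⟨C₂, hC₂⟩ := hGb
    refine ⟨C₁ * C₂, fun w hw => ?_⟩
    rw [Pi.mul_apply, norm_mul]
    exact mul_le_mul (hC₁ w hw) (hC₂ w hw) (norm_nonneg _)
      ((norm_nonneg _).trans (hC₁ 0 (mem_ball_self one_pos)))
  · rw [if_neg hp] at hFb hGb
    rw [if_neg (by simp [hp, ENNReal.div_eq_top]), ENNReal.toReal_div, ENNReal.toReal_ofNat]
    obtain ⟨C₁, hC₁⟩ := hFb
    obtain ⟨C₂, hC₂⟩ := hGb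
    refine ⟨(C₁ + C₂) / 2, fun r hr => ?_⟩
    have hiF := integrable_norm_comp_mul_bz_rpow hFd hr (ENNReal.toReal_nonneg (a := p))
    have hiG := integrable_norm_comp_mul_bz_rpow hGd hr (ENNReal.toReal_nonneg (a := p))
    calc (∫ x, ‖(F * G) ((r : ℂ) * bz x)‖ ^ (p.toReal / 2) ∂m)
        ≤ ∫ x, (‖F ((r : ℂ) * bz x)‖ ^ p.toReal + ‖G ((r : ℂ) * bz x)‖ ^ p.toReal) / 2 ∂m :=
          integral_mono_of_nonneg (Eventually.of_forall fun _ => by positivity)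
            ((hiF.add hiG).div_const 2) (Eventually.of_forall fun x => by
              simpa only [Pi.mul_apply, norm_mul] using
                Real.mul_rpow_half_le_add_rpow (norm_nonneg _) (norm_nonneg _) p.toReal)
      _ = ((∫ x, ‖F ((r : ℂ) * bz x)‖ ^ p.toReal ∂m) +
            ∫ x, ‖G ((r : ℂ) * bz x)‖ ^ p.toReal ∂m) / 2 := by
          rw [integral_div, integral_add hiF hiG]
      _ ≤ (C₁ + C₂) / 2 := by linarith [hC₁ r hr, hC₂ r hr]

lemma IsBoundary.mul {F G : ℂ → ℂ} {f g : 𝕋 → ℂ} (hF : IsBoundary F f) (hG : IsBoundary G g) :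
    IsBoundary (F * G) (f * g) := by
  filter_upwards [hF, hG] with x hFx hGx using hFx.mul hGx

lemma MemHp.mul {p : ℝ≥0∞} {f g : 𝕋 → ℂ} (hf : MemHp p f) (hg : MemHp p g) :
    MemHp (p / 2) (f * g) := by
  obtain ⟨F, hF, hFf⟩ := hf
  obtain ⟨G, hG, hGg⟩ := hg
  exact ⟨F * G, hF.mul hG, hFf.mul hGg⟩

lemma mul_conj_mul_mul (w f : ℂ) : f * conj (w * f) = conj w * ((‖f‖ ^ 2 : ℝ) : ℂ) := by
  rw [map_mul, Complex.ofReal_pow, ← Complex.mul_conj']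
  ring

theorem stmt5_general (p : ℝ≥0∞) (φ : 𝕋 → ℂ) (g : 𝕋 → ℝ)
    (hex : ∃ f : 𝕋 → ℂ, MemKp p φ f ∧ ∀ᵐ x ∂m, ‖f x‖ ^ 2 = g x) :
    MemHp (p/2) (fun x => conj (bz x * φ x) * (g x : ℂ)) := by
  obtain ⟨f, ⟨hf, hconj⟩, hfg⟩ := hex
  obtain ⟨H, hH, hbd⟩ := hf.mul hconj
  refine ⟨H, hH, ?_⟩
  filter_upwards [hbd, hfg] with x hx hfgx
  rwa [Pi.mul_apply, mul_conj_mul_mul, hfgx] at hx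

/-- If `g = |f|²` a.e. for some `f ∈ K_p(φ)`, then
`conj (z φ) · g ∈ H^{p/2}`. -/
theorem stmt5 (p : ℝ≥0∞) (hp : 1 ≤ p) (φ : 𝕋 → ℂ) (hφ : MemLp φ ∞ m)
    (hφ0 : ¬ φ =ᵐ[m] 0)
    (hker : ∃ f : 𝕋 → ℂ, MemKp p φ f ∧ ¬ f =ᵐ[m] 0)
    (g : 𝕋 → ℝ) (hg : MemLp g (p/2) m) (hgpos : ∀ᵐ x ∂m, 0 ≤ g x)
    (hex : ∃ f : 𝕋 → ℂ, MemKp p φ f ∧ ∀ᵐ x ∂m, ‖f x‖ ^ 2 = g x) :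
    MemHp (p/2) (fun x => conj (bz x * φ x) * (g x : ℂ)) :=
  stmt5_general p φ g hex
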